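/- Let C ⊆ ℝᵐ be a closed convex set, f : C → ℝ a convex function, and h a strictly convex differentiable function generating the Bregman divergence D_h. Suppose x lies in the interior of dom h and x⁺ ∈ argmin_{u ∈ dom h ∩ C} { f(u) + D_h(u,x) }, with x⁺ in the interior of dom h. Then for every u ∈ dom h ∩ C it holds that f(x⁺) + D_h(x⁺, x) ≤ f(u) + D_h(u,x) - D_h(u,x⁺). -/

import Mathlib

/-!
Minimality of `x⁺` for `f + D_h(·, x)` on the convex set `dom h ∩ C`, with `f` convex and
`D_h(·, x)` differentiable at `x⁺` with gradient `∇h(x⁺) - ∇h(x)`, gives the first-order condition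
`f(x⁺) - f(u) ≤ ⟪∇h(x⁺) - ∇h(x), u - x⁺⟫`. The three-point identity
`D_h(u, x) - D_h(u, x⁺) - D_h(x⁺, x) = ⟪∇h(x⁺) - ∇h(x), u - x⁺⟫` turns this into the claim.
-/

open scoped RealInnerProductSpace

open Set

theorem ConvexOn.sub_le_fderiv_of_isMinOn_add {E : Type*} [NormedAddCommGroup E]
    [NormedSpace ℝ E] {S : Set E} {g φ : E → ℝ} {φ' : E →L[ℝ] ℝ} {a u : E}
    (hg : ConvexOn ℝ S g) (hφ : HasFDerivAt φ φ' a) (hmin : IsMinOn (g + φ) S a)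
    (ha : a ∈ S) (hu : u ∈ S) :
    g a - g u ≤ φ' (u - a) := by
  -- replacing `g` on the segment by its chord gives a differentiable function still minimal at `a`
  set ψ : ℝ → ℝ := fun t => φ (a + t • (u - a)) + t * (g u - g a)
  have hψmin : IsMinOn ψ (Icc 0 1) 0 := by
    intro t ht
    have hconv : g (a + t • (u - a)) ≤ (1 - t) * g a + t * g u := by
      have h := hg.2 ha hu (sub_nonneg.2 ht.2) ht.1 (by ring)
      rwa [show (1 - t) • a + t • u = a + t • (u - a) by module] at h
    have hle : g a + φ a ≤ g (a + t • (u - a)) + φ (a + t • (u - a)) :=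
      hmin (hg.1.add_smul_sub_mem ha hu ht)
    change ψ 0 ≤ ψ t
    simp only [ψ, zero_smul, add_zero, zero_mul]
    nlinarith
  have hψ : HasDerivAt ψ (φ' (u - a) + (g u - g a)) 0 := by
    have hline : HasDerivAt (fun t : ℝ => a + t • (u - a)) (u - a) 0 := by
      simpa using ((hasDerivAt_id (0 : ℝ)).smul_const (u - a)).const_add a
    have hφ0 : HasFDerivAt φ φ' (a + (0 : ℝ) • (u - a)) := by simpa using hφ
    exact (hφ0.comp_hasDerivAt 0 hline).add (hasDerivAt_mul_const (g u - g a))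
  have hone : (1 : ℝ) ∈ posTangentConeAt (Icc 0 1) 0 :=
    mem_posTangentConeAt_of_segment_subset (by simp [segment_eq_Icc])
  have h := hψmin.localize.hasFDerivWithinAt_nonneg hψ.hasFDerivAt.hasFDerivWithinAt hone
  rw [ContinuousLinearMap.toSpanSingleton_apply, one_smul] at h
  linarith

theorem bregman_three_point {E : Type*} [NormedAddCommGroup E] [InnerProductSpace ℝ E]
    {h : E → ℝ} {grad : E → E} {D : E → E → ℝ}
    (hD : ∀ p p', D p p' = h p - h p' - ⟪grad p', p - p'⟫) (u x y : E) :
    D u x - D u y - D y x = ⟪grad y - grad x, u - y⟫ := by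
  simp only [hD, inner_sub_left, inner_sub_right]
  ring

theorem three_point_descent_general (m : ℕ) (C Dom : Set (EuclideanSpace ℝ (Fin m)))
    (hCconv : Convex ℝ C)
    (f : EuclideanSpace ℝ (Fin m) → ℝ) (hf : ConvexOn ℝ C f)
    (h : EuclideanSpace ℝ (Fin m) → ℝ) (hh : StrictConvexOn ℝ Dom h)
    (grad : EuclideanSpace ℝ (Fin m) → EuclideanSpace ℝ (Fin m))
    (hgrad : ∀ y ∈ interior Dom, HasGradientAt h (grad y) y)
    (Dh : EuclideanSpace ℝ (Fin m) → EuclideanSpace ℝ (Fin m) → ℝ)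
    (hDh : ∀ p p', Dh p p' = h p - h p' - ⟪grad p', p - p'⟫)
    (x xplus : EuclideanSpace ℝ (Fin m))
    (hxplus : xplus ∈ interior Dom) (hxplusC : xplus ∈ C)
    (hmin : ∀ u ∈ Dom ∩ C, f xplus + Dh xplus x ≤ f u + Dh u x) :
    ∀ u ∈ Dom ∩ C, f xplus + Dh xplus x ≤ f u + Dh u x - Dh u xplus := by
  intro u hu
  have hfS : ConvexOn ℝ (Dom ∩ C) f := hf.subset inter_subset_right (hh.1.inter hCconv)
  have hDx : HasFDerivAt (fun p => Dh p x)
      ((InnerProductSpace.toDual ℝ _ (grad xplus)) - innerSL ℝ (grad x)) xplus := by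
    simp only [hDh]
    exact ((hgrad xplus hxplus).hasFDerivAt.sub_const (h x)).sub
      ((innerSL ℝ (grad x)).hasFDerivAt.comp xplus ((hasFDerivAt_id xplus).sub_const x))
  have hopt := hfS.sub_le_fderiv_of_isMinOn_add hDx (isMinOn_iff.2 hmin)
    ⟨interior_subset hxplus, hxplusC⟩ hu
  rw [sub_apply, InnerProductSpace.toDual_apply_apply, innerSL_apply_apply,
    ← inner_sub_left] at hopt
  linarith [bregman_three_point hDh u x xplus]

theorem three_point_descent (m : ℕ) (C Dom : Set (EuclideanSpace ℝ (Fin m)))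
    (hC : IsClosed C) (hCconv : Convex ℝ C)
    (f : EuclideanSpace ℝ (Fin m) → ℝ) (hf : ConvexOn ℝ C f)
    (h : EuclideanSpace ℝ (Fin m) → ℝ) (hh : StrictConvexOn ℝ Dom h)
    (grad : EuclideanSpace ℝ (Fin m) → EuclideanSpace ℝ (Fin m))
    (hgrad : ∀ y ∈ interior Dom, HasGradientAt h (grad y) y)
    (Dh : EuclideanSpace ℝ (Fin m) → EuclideanSpace ℝ (Fin m) → ℝ)
    (hDh : ∀ p p', Dh p p' = h p - h p' - ⟪grad p', p - p'⟫)
    (x xplus : EuclideanSpace ℝ (Fin m))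
    (hx : x ∈ interior Dom) (hxplus : xplus ∈ interior Dom) (hxplusC : xplus ∈ C)
    (hmin : ∀ u ∈ Dom ∩ C, f xplus + Dh xplus x ≤ f u + Dh u x) :
    ∀ u ∈ Dom ∩ C, f xplus + Dh xplus x ≤ f u + Dh u x - Dh u xplus :=
  three_point_descent_general m C Dom hCconv f hf h hh grad hgrad Dh hDh x xplus hxplus hxplusC hmin
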